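/- arXiv:2012.12552 — 2 statements merged into one kernel-verified Lean document; each statement's English description precedes it below -/
import Mathlib

section
/- Let κ be strictly conditionally positive definite of order l on ℝ^d, X = {x_1, …, x_n} ⊆ ℝ^d a set of distinct points that is (l−1)-unisolvent, A the n×n matrix A_{ik} = κ(x_i, x_k), and P the n×m matrix P_{ij} = p_j(x_i) for a basis p_1, …, p_m of polynomials of total degree ≤ l−1 in d variables. Then the block matrix [[A, P], [Pᵀ, O]] is invertible, so the interpolation system with polynomial reproduction constraints has a unique solution. -/
open MvPolynomial Matrix

/-!
If `(c, μ)` lies in the kernel of `[[A, P], [Pᵀ, 0]]`, then `Pᵀ c = 0` and `A c = -P μ`, so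
`cᵀ A c = -(Pᵀ c)ᵀ μ = 0`. The condition `Pᵀ c = 0` says exactly that `c` annihilates every
polynomial of degree `≤ l - 1` on the nodes, so conditional positive definiteness forces `c = 0`.
Then `P μ = 0`: the polynomial with coordinates `μ` vanishes on the nodes, hence is zero by
unisolvency, and `μ = 0`.
-/

namespace Matrix

variable {K n m : Type*} [Field K] [Fintype n] [Fintype m]
  [DecidableEq n] [DecidableEq m]

theorem isUnit_fromBlocks_transpose_zero (A : Matrix n n K) (P : Matrix n m K)
    (hA : ∀ c, c ≠ 0 → Pᵀ *ᵥ c = 0 → c ⬝ᵥ A *ᵥ c ≠ 0) (hP : ∀ μ, P *ᵥ μ = 0 → μ = 0) :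
    IsUnit (fromBlocks A P Pᵀ 0) := by
  rw [isUnit_iff_isUnit_det, isUnit_iff_ne_zero, Ne, ← exists_mulVec_eq_zero_iff]
  rintro ⟨v, hv0, hv⟩
  obtain ⟨c, μ, rfl⟩ : ∃ c μ, v = Sum.elim c μ :=
    ⟨v ∘ Sum.inl, v ∘ Sum.inr, (Sum.elim_comp_inl_inr v).symm⟩
  rw [fromBlocks_mulVec, ← Sum.elim_zero_zero, Sum.elim_eq_iff] at hv
  simp only [Sum.elim_comp_inl, Sum.elim_comp_inr, zero_mulVec, add_zero] at hv
  obtain ⟨hAc, hPc⟩ := hv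
  have hc : c = 0 := by
    by_contra hc
    refine hA c hc hPc ?_
    have hAc' : A *ᵥ c = -(P *ᵥ μ) := eq_neg_of_add_eq_zero_left hAc
    rw [hAc', dotProduct_neg, dotProduct_mulVec, ← mulVec_transpose, hPc, zero_dotProduct,
      neg_zero]
  have hμ : μ = 0 := hP μ (by simpa [hc] using hAc)
  exact hv0 (by rw [hc, hμ, Sum.elim_zero_zero])

end Matrix

namespace MvPolynomial

variable {σ R ι : Type*} [CommRing R] {k m : ℕ}

noncomputable def collocationMatrix (x : ι → σ → R)
    (b : Module.Basis (Fin m) R (restrictTotalDegree σ R k)) :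
    Matrix ι (Fin m) R :=
  of fun i j => eval (x i) (b j : MvPolynomial σ R)

theorem collocationMatrix_mulVec (x : ι → σ → R)
    (b : Module.Basis (Fin m) R (restrictTotalDegree σ R k)) (μ : Fin m → R) :
    collocationMatrix x b *ᵥ μ = fun i => eval (x i) (b.equivFun.symm μ : MvPolynomial σ R) := by
  ext i
  simp [collocationMatrix, mulVec, dotProduct, Module.Basis.equivFun_symm_apply, mul_comm]

theorem sum_mul_eval_eq_transpose_mulVec_dotProduct [Fintype ι] (x : ι → σ → R)
    (b : Module.Basis (Fin m) R (restrictTotalDegree σ R k)) (c : ι → R)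
    (p : restrictTotalDegree σ R k) :
    ∑ i, c i * eval (x i) (p : MvPolynomial σ R) =
      (collocationMatrix x b)ᵀ *ᵥ c ⬝ᵥ b.equivFun p := by
  rw [mulVec_transpose, ← dotProduct_mulVec, collocationMatrix_mulVec,
    LinearEquiv.symm_apply_apply]
  rfl

theorem eq_zero_of_collocationMatrix_mulVec_eq_zero {x : ι → σ → R}
    (hx : ∀ p : MvPolynomial σ R, p.totalDegree ≤ k → (∀ i, eval (x i) p = 0) → p = 0)
    (b : Module.Basis (Fin m) R (restrictTotalDegree σ R k)) {μ : Fin m → R}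
    (hμ : collocationMatrix x b *ᵥ μ = 0) : μ = 0 := by
  have hq : (b.equivFun.symm μ : MvPolynomial σ R) = 0 :=
    hx _ ((mem_restrictTotalDegree σ k _).mp (b.equivFun.symm μ).2) fun i => by
      simpa [collocationMatrix_mulVec] using congrFun hμ i
  exact b.equivFun.symm.map_eq_zero_iff.mp (Subtype.ext hq)

end MvPolynomial

theorem dotProduct_mulVec_kernelMatrix {X R n : Type*} [CommSemiring R] [Fintype n]
    (κ : X → X → R) (x : n → X) (c : n → R) :
    c ⬝ᵥ (of fun i k => κ (x i) (x k)) *ᵥ c = ∑ i, ∑ k, c i * c k * κ (x i) (x k) := by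
  simp only [dotProduct, mulVec, of_apply, Finset.mul_sum]
  exact Finset.sum_congr rfl fun i _ => Finset.sum_congr rfl fun k _ => by ring

theorem cpd_interpolation_block_matrix_invertible_general (d l n m : ℕ)
    (κ : (Fin d → ℝ) → (Fin d → ℝ) → ℝ)
    (hκ : ∀ (N : ℕ) (u : Fin N → (Fin d → ℝ)), Function.Injective u →
      ∀ c : Fin N → ℝ, c ≠ 0 →
        (∀ p : MvPolynomial (Fin d) ℝ, p.totalDegree ≤ l - 1 →
          ∑ i, c i * eval (u i) p = 0) →
        0 < ∑ i, ∑ j, c i * c j * κ (u i) (u j))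
    (x : Fin n → (Fin d → ℝ)) (hx : Function.Injective x)
    (b : Module.Basis (Fin m) ℝ (MvPolynomial.restrictTotalDegree (Fin d) ℝ (l - 1)))
    (hunisolvent : ∀ p : MvPolynomial (Fin d) ℝ, p.totalDegree ≤ l - 1 →
      (∀ i, eval (x i) p = 0) → p = 0)
    (A : Matrix (Fin n) (Fin n) ℝ) (hA : ∀ i k, A i k = κ (x i) (x k))
    (P : Matrix (Fin n) (Fin m) ℝ) (hP : ∀ i j, P i j = eval (x i) ((b j : MvPolynomial (Fin d) ℝ))) :
    IsUnit (Matrix.fromBlocks A P Pᵀ (0 : Matrix (Fin m) (Fin m) ℝ)) := by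
  obtain rfl : A = of fun i k => κ (x i) (x k) := Matrix.ext hA
  obtain rfl : P = collocationMatrix x b := Matrix.ext hP
  refine isUnit_fromBlocks_transpose_zero _ _ (fun c hc hPc => ?_)
    (fun μ hμ => eq_zero_of_collocationMatrix_mulVec_eq_zero hunisolvent b hμ)
  have hc_orth : ∀ p : MvPolynomial (Fin d) ℝ, p.totalDegree ≤ l - 1 →
      ∑ i, c i * eval (x i) p = 0 := fun p hp => by
    simpa [hPc] using sum_mul_eval_eq_transpose_mulVec_dotProduct x b c
      ⟨p, (mem_restrictTotalDegree _ _ p).mpr hp⟩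
  rw [dotProduct_mulVec_kernelMatrix]
  exact (hκ n x hx c hc hc_orth).ne'

/-- Let `κ` be a symmetric kernel on `ℝ^d` that is strictly conditionally positive
definite of order `l`, let `x 1, …, x n` be distinct points forming an
`(l−1)`-unisolvent set, let `A` be the kernel matrix `A i k = κ (x i) (x k)` and `P`
the collocation matrix `P i j = p j (x i)` for a basis `p 1, …, p m` of the space of
polynomials of total degree ≤ `l − 1` in `d` variables.  Then the block matrix
`[[A, P], [Pᵀ, O]]` is invertible, so the interpolation system with polynomial
reproduction constraints has a unique solution. -/
theorem cpd_interpolation_block_matrix_invertible (d l n m : ℕ)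
    (κ : (Fin d → ℝ) → (Fin d → ℝ) → ℝ)
    (hsym : ∀ u v, κ u v = κ v u)
    (hκ : ∀ (N : ℕ) (u : Fin N → (Fin d → ℝ)), Function.Injective u →
      ∀ c : Fin N → ℝ, c ≠ 0 →
        (∀ p : MvPolynomial (Fin d) ℝ, p.totalDegree ≤ l - 1 →
          ∑ i, c i * eval (u i) p = 0) →
        0 < ∑ i, ∑ j, c i * c j * κ (u i) (u j))
    (x : Fin n → (Fin d → ℝ)) (hx : Function.Injective x)
    (b : Module.Basis (Fin m) ℝ (MvPolynomial.restrictTotalDegree (Fin d) ℝ (l - 1)))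
    (hunisolvent : ∀ p : MvPolynomial (Fin d) ℝ, p.totalDegree ≤ l - 1 →
      (∀ i, eval (x i) p = 0) → p = 0)
    (A : Matrix (Fin n) (Fin n) ℝ) (hA : ∀ i k, A i k = κ (x i) (x k))
    (P : Matrix (Fin n) (Fin m) ℝ) (hP : ∀ i j, P i j = eval (x i) ((b j : MvPolynomial (Fin d) ℝ))) :
    IsUnit (Matrix.fromBlocks A P Pᵀ (0 : Matrix (Fin m) (Fin m) ℝ)) :=
  cpd_interpolation_block_matrix_invertible_general d l n m κ hκ x hx b hunisolvent A hA P hP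
end

section
/- The cubic radial function φ(r) = r³ on ℝ (i.e., the kernel κ(x, y) = |x − y|³) is strictly conditionally positive definite of order 2 on ℝ: for any distinct x_1, …, x_n ∈ ℝ and nonzero c ∈ ℝ^n with Σ c_i = 0 and Σ c_i x_i = 0, one has Σ_{i,j} c_i c_j |x_i − x_j|³ > 0. -/
/-!
Write `h(t) = ∑ᵢ cᵢ (t - xᵢ)₊`. The moment conditions `∑ cᵢ = ∑ cᵢ xᵢ = 0` make the linear part
`∑ cᵢ (t - xᵢ)` vanish, so also `h(t) = ∑ᵢ cᵢ (xᵢ - t)₊`. Multiplying the two expressions and using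
`∫ (t - a)₊ (b - t)₊ dt = (b - a)₊³ / 6` gives `∑ᵢⱼ cᵢ cⱼ |xᵢ - xⱼ|³ = 12 ∫ h²`. The spline `h` is
continuous, and just to the left of the largest node carrying a nonzero coefficient it equals
`c_m (x_m - t) ≠ 0`, so the integral is positive.
-/

open MeasureTheory Filter Topology

lemma posPart_sub_mul_posPart_sub_eq_indicator (a b t : ℝ) :
    max (t - a) 0 * max (b - t) 0 = (Set.Icc a b).indicator (fun t => (t - a) * (b - t)) t := by
  by_cases ht : t ∈ Set.Icc a b
  · rw [Set.indicator_of_mem ht, max_eq_left (by linarith [ht.1]),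
      max_eq_left (by linarith [ht.2])]
  · rw [Set.indicator_of_notMem ht]
    rcases not_and_or.mp ht with h | h
    · rw [max_eq_right (by linarith [not_le.mp h] : t - a ≤ 0), zero_mul]
    · rw [max_eq_right (by linarith [not_le.mp h] : b - t ≤ 0), mul_zero]

lemma integrable_posPart_sub_mul_posPart_sub (a b : ℝ) :
    Integrable fun t => max (t - a) 0 * max (b - t) 0 := by
  simp_rw [posPart_sub_mul_posPart_sub_eq_indicator a b]
  exact (integrable_indicator_iff measurableSet_Icc).2 <|
    (Continuous.continuousOn (by fun_prop)).integrableOn_Icc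

lemma intervalIntegral_sub_mul_sub (a b : ℝ) :
    ∫ t in a..b, (t - a) * (b - t) = (b - a) ^ 3 / 6 := by
  have hpoly : (fun t => (t - a) * (b - t)) = fun t => -t ^ 2 + (a + b) * t - a * b := by
    funext t; ring
  rw [hpoly, intervalIntegral.integral_sub, intervalIntegral.integral_add,
    intervalIntegral.integral_neg, intervalIntegral.integral_const_mul, integral_pow, integral_id,
    intervalIntegral.integral_const]
  · simp only [smul_eq_mul]; ring
  all_goals exact Continuous.intervalIntegrable (by fun_prop) _ _

lemma integral_posPart_sub_mul_posPart_sub (a b : ℝ) :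
    ∫ t, max (t - a) 0 * max (b - t) 0 = max (b - a) 0 ^ 3 / 6 := by
  simp_rw [posPart_sub_mul_posPart_sub_eq_indicator a b]
  rw [integral_indicator measurableSet_Icc, integral_Icc_eq_integral_Ioc]
  rcases le_total a b with hab | hba
  · rw [← intervalIntegral.integral_of_le hab, intervalIntegral_sub_mul_sub,
      max_eq_left (sub_nonneg.2 hab)]
  · rw [Set.Ioc_eq_empty_of_le hba, Measure.restrict_empty, integral_zero_measure,
      max_eq_right (sub_nonpos.2 hba)]
    ring

lemma abs_pow_three_eq_posPart_add_posPart_neg (a : ℝ) :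
    |a| ^ 3 = max a 0 ^ 3 + max (-a) 0 ^ 3 := by
  rcases le_total 0 a with ha | ha
  · rw [abs_of_nonneg ha, max_eq_left ha, max_eq_right (neg_nonpos.2 ha)]; ring
  · rw [abs_of_nonpos ha, max_eq_right ha, max_eq_left (neg_nonneg.2 ha)]; ring

lemma sum_mul_abs_sub_pow_three {ι : Type*} [Fintype ι] (c x : ι → ℝ) :
    ∑ i, ∑ j, c i * c j * |x i - x j| ^ 3 = 2 * ∑ i, ∑ j, c i * c j * max (x j - x i) 0 ^ 3 := by
  have hswap : ∑ i, ∑ j, c i * c j * max (x i - x j) 0 ^ 3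
      = ∑ i, ∑ j, c i * c j * max (x j - x i) 0 ^ 3 := by
    rw [Finset.sum_comm]
    exact Finset.sum_congr rfl fun i _ => Finset.sum_congr rfl fun j _ => by ring
  simp only [abs_pow_three_eq_posPart_add_posPart_neg, neg_sub, mul_add, Finset.sum_add_distrib,
    hswap]
  ring

section RampSum

variable {ι : Type*} [Fintype ι] (c x : ι → ℝ)

def rampSum (t : ℝ) : ℝ := ∑ i, c i * max (t - x i) 0

lemma continuous_rampSum : Continuous (rampSum c x) := by
  unfold rampSum; fun_prop

variable {c x}

lemma rampSum_eq_sum_posPart_sub (h0 : ∑ i, c i = 0) (h1 : ∑ i, c i * x i = 0) (t : ℝ) :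
    rampSum c x t = ∑ i, c i * max (x i - t) 0 := by
  have hlin : ∑ i, c i * (max (t - x i) 0 - max (x i - t) 0) = 0 := by
    have hramp (i : ι) : max (t - x i) 0 - max (x i - t) 0 = t - x i := by
      rcases le_total (x i) t with h | h
      · rw [max_eq_left (sub_nonneg.2 h), max_eq_right (sub_nonpos.2 h), sub_zero]
      · rw [max_eq_right (sub_nonpos.2 h), max_eq_left (sub_nonneg.2 h)]; ring
    simp only [hramp, mul_sub, Finset.sum_sub_distrib, ← Finset.sum_mul, h0, h1]
    ring
  simp only [mul_sub, Finset.sum_sub_distrib] at hlin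
  exact sub_eq_zero.1 hlin

lemma sq_rampSum (h0 : ∑ i, c i = 0) (h1 : ∑ i, c i * x i = 0) (t : ℝ) :
    rampSum c x t ^ 2 = ∑ i, ∑ j, c i * c j * (max (t - x i) 0 * max (x j - t) 0) := by
  rw [sq]
  nth_rw 2 [rampSum_eq_sum_posPart_sub h0 h1]
  rw [rampSum, Finset.sum_mul_sum]
  exact Finset.sum_congr rfl fun i _ => Finset.sum_congr rfl fun j _ => by ring

lemma integrable_sq_rampSum (h0 : ∑ i, c i = 0) (h1 : ∑ i, c i * x i = 0) :
    Integrable fun t => rampSum c x t ^ 2 := by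
  simp_rw [sq_rampSum h0 h1]
  exact integrable_finsetSum _ fun i _ => integrable_finsetSum _ fun j _ =>
    (integrable_posPart_sub_mul_posPart_sub _ _).const_mul _

lemma integral_sq_rampSum (h0 : ∑ i, c i = 0) (h1 : ∑ i, c i * x i = 0) :
    ∫ t, rampSum c x t ^ 2 = ∑ i, ∑ j, c i * c j * (max (x j - x i) 0 ^ 3 / 6) := by
  simp_rw [sq_rampSum h0 h1]
  rw [integral_finsetSum _ fun i _ => integrable_finsetSum _ fun j _ =>
    (integrable_posPart_sub_mul_posPart_sub _ _).const_mul _]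
  refine Finset.sum_congr rfl fun i _ => ?_
  rw [integral_finsetSum _ fun j _ => (integrable_posPart_sub_mul_posPart_sub _ _).const_mul _]
  simp only [integral_const_mul, integral_posPart_sub_mul_posPart_sub]

lemma sum_mul_abs_sub_pow_three_eq_integral_sq_rampSum (h0 : ∑ i, c i = 0)
    (h1 : ∑ i, c i * x i = 0) :
    ∑ i, ∑ j, c i * c j * |x i - x j| ^ 3 = 12 * ∫ t, rampSum c x t ^ 2 := by
  rw [sum_mul_abs_sub_pow_three, integral_sq_rampSum h0 h1]
  simp only [Finset.mul_sum]
  exact Finset.sum_congr rfl fun i _ => Finset.sum_congr rfl fun j _ => by ring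

lemma exists_rampSum_ne_zero (hx : Function.Injective x) (hc : c ≠ 0) (h0 : ∑ i, c i = 0)
    (h1 : ∑ i, c i * x i = 0) : ∃ t, rampSum c x t ≠ 0 := by
  classical
  obtain ⟨i₀, hi₀⟩ := Function.ne_iff.mp hc
  obtain ⟨m, hm, hmax⟩ := (Finset.univ.filter fun i => c i ≠ 0).exists_max_image x
    ⟨i₀, Finset.mem_filter.2 ⟨Finset.mem_univ _, hi₀⟩⟩
  have hcm : c m ≠ 0 := (Finset.mem_filter.1 hm).2
  have hnear : ∀ᶠ t in 𝓝[<] x m, t < x m ∧ ∀ j, x j < x m → x j < t :=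
    eventually_mem_nhdsWithin.and <| eventually_all.2 fun j => eventually_imp_distrib_left.2
      fun hj => (eventually_gt_nhds hj).filter_mono nhdsWithin_le_nhds
  obtain ⟨t, htm, hleft⟩ := hnear.exists
  refine ⟨t, ?_⟩
  have hterm (j : ι) (hj : j ≠ m) : c j * max (x j - t) 0 = 0 := by
    by_cases hcj : c j = 0
    · rw [hcj, zero_mul]
    · have hlt : x j < x m := (hmax j (Finset.mem_filter.2 ⟨Finset.mem_univ _, hcj⟩)).lt_of_ne
        (hx.ne hj)
      rw [max_eq_right (sub_nonpos.2 (hleft j hlt).le), mul_zero]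
  rw [rampSum_eq_sum_posPart_sub h0 h1, Fintype.sum_eq_single m hterm,
    max_eq_left (sub_nonneg.2 htm.le)]
  exact mul_ne_zero hcm (sub_ne_zero.2 htm.ne')

lemma integral_sq_rampSum_pos (hx : Function.Injective x) (hc : c ≠ 0) (h0 : ∑ i, c i = 0)
    (h1 : ∑ i, c i * x i = 0) : 0 < ∫ t, rampSum c x t ^ 2 := by
  rw [integral_pos_iff_support_of_nonneg (fun t => sq_nonneg _) (integrable_sq_rampSum h0 h1)]
  have hopen : IsOpen (Function.support fun t => rampSum c x t ^ 2) :=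
    ((continuous_rampSum c x).pow 2).isOpen_support
  obtain ⟨t, ht⟩ := exists_rampSum_ne_zero hx hc h0 h1
  exact hopen.measure_pos volume ⟨t, pow_ne_zero 2 ht⟩

end RampSum

/-- The cubic radial kernel `κ(x,y) = |x − y|³` is strictly conditionally positive
definite of order `2` on `ℝ`: for any distinct `x 1, …, x n ∈ ℝ` and nonzero
`c ∈ ℝ^n` with `Σ c i = 0` and `Σ c i * x i = 0`, one has
`Σ_{i,j} c i * c j * |x i − x j|³ > 0`. -/
theorem cubic_kernel_scpd_order_two (n : ℕ) (x : Fin n → ℝ)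
    (hx : Function.Injective x) (c : Fin n → ℝ) (hc : c ≠ 0)
    (h0 : ∑ i, c i = 0) (h1 : ∑ i, c i * x i = 0) :
    0 < ∑ i, ∑ j, c i * c j * |x i - x j| ^ 3 := by
  rw [sum_mul_abs_sub_pow_three_eq_integral_sq_rampSum h0 h1]
  exact mul_pos (by norm_num) (integral_sq_rampSum_pos hx hc h0 h1)
end
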